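/- In a block graph G, the unique shortest path between two vertices x and y has the minimum number of vertices among all paths from x to y; equivalently, the vertex set of the shortest path is contained in the vertex set of every path from x to y. -/

import Mathlib

/-- The induced subgraph of `G` on the vertex set `S` is a 1-clique sum of complete
graphs. -/
inductive SimpleGraph.IsCliqueSumOfCompletes {V : Type*} (G : SimpleGraph V) : Set V → Prop
  | complete (S : Set V) (h : ∀ ⦃i⦄, i ∈ S → ∀ ⦃j⦄, j ∈ S → i ≠ j → G.Adj i j) :
      IsCliqueSumOfCompletes G S
  | sum (A B : Set V) (c : V) (hAB : Disjoint A B) (hcA : c ∉ A) (hcB : c ∉ B)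
      (hA : A.Nonempty) (hB : B.Nonempty)
      (hsep : ∀ a ∈ A, ∀ b ∈ B, ∀ w : G.Walk a b,
        (∀ x ∈ w.support, x ∈ A ∪ B ∪ {c}) → c ∈ w.support)
      (h1 : IsCliqueSumOfCompletes G (A ∪ {c}))
      (h2 : IsCliqueSumOfCompletes G (B ∪ {c})) :
      IsCliqueSumOfCompletes G (A ∪ B ∪ {c})

/-- A block graph: every connected component is a 1-clique sum of complete graphs. -/
def SimpleGraph.IsBlockGraph {V : Type*} (G : SimpleGraph V) : Prop :=
  ∀ v : V, G.IsCliqueSumOfCompletes {w | G.Reachable v w}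

/-!
Induct on the clique-sum structure, proving the relative statement for walks confined to the
vertex set `S` of the summand. In a complete graph a shortest walk has length at most one, so its
vertices are the two endpoints. In a sum `A ∪ B ∪ {c}` glued at `c`, a path whose endpoints lie in
`A ∪ {c}` cannot enter `B`: it would have to pass through the cut vertex `c` both before and after
doing so. Hence every path from `A` to `B` is a path to `c` inside `A ∪ {c}` followed by a path from
`c` inside `B ∪ {c}`, and both halves of a shortest such walk are shortest in their summands.
-/

namespace SimpleGraph

variable {V : Type*} {G : SimpleGraph V}

namespace Walk

variable {u v w x : V}

lemma IsPath.eq_of_mem_support_append {p : G.Walk u v} {q : G.Walk v w}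
    (h : (p.append q).IsPath) (hp : x ∈ p.support) (hq : x ∈ q.support) : x = v := by
  have hnd := h.support_nodup
  rw [support_append, List.nodup_append] at hnd
  rw [← cons_tail_support q] at hq
  rcases List.mem_cons.mp hq with rfl | hq
  · rfl
  · exact absurd rfl (hnd.2.2 x hp x hq)

lemma eq_or_eq_of_mem_support_of_length_le_one {p : G.Walk u v} (hp : p.length ≤ 1)
    (hx : x ∈ p.support) : x = u ∨ x = v := by
  cases p with
  | nil => simp_all
  | cons _ p =>
    cases p with
    | nil => simp_all
    | cons => simp at hp

def IsShortestWithin (p : G.Walk u v) (S : Set V) : Prop :=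
  (∀ y ∈ p.support, y ∈ S) ∧ ∀ r : G.Walk u v, (∀ y ∈ r.support, y ∈ S) → p.length ≤ r.length

variable {S T : Set V}

lemma IsShortestWithin.mono {p : G.Walk u v} (hp : p.IsShortestWithin S) (hT : T ⊆ S)
    (hpT : ∀ y ∈ p.support, y ∈ T) : p.IsShortestWithin T :=
  ⟨hpT, fun r hr => hp.2 r fun y hy => hT (hr y hy)⟩

variable [DecidableEq V]

lemma IsShortestWithin.takeUntil {p : G.Walk u v} (hp : p.IsShortestWithin S)
    (hx : x ∈ p.support) : (p.takeUntil x hx).IsShortestWithin S := by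
  refine ⟨fun y hy => hp.1 y (p.support_takeUntil_subset_support hx hy), fun r hr => ?_⟩
  have := hp.2 (r.append (p.dropUntil x hx)) fun y hy => by
    rcases (mem_support_append_iff _ _).mp hy with hy | hy
    · exact hr y hy
    · exact hp.1 y (p.support_dropUntil_subset_support hx hy)
  have hlen := congrArg length (p.take_spec hx)
  rw [length_append] at this hlen
  omega

lemma IsShortestWithin.dropUntil {p : G.Walk u v} (hp : p.IsShortestWithin S)
    (hx : x ∈ p.support) : (p.dropUntil x hx).IsShortestWithin S := by
  refine ⟨fun y hy => hp.1 y (p.support_dropUntil_subset_support hx hy), fun r hr => ?_⟩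
  have := hp.2 ((p.takeUntil x hx).append r) fun y hy => by
    rcases (mem_support_append_iff _ _).mp hy with hy | hy
    · exact hp.1 y (p.support_takeUntil_subset_support hx hy)
    · exact hr y hy
  have hlen := congrArg length (p.take_spec hx)
  rw [length_append] at this hlen
  omega

end Walk

def ShortestPathUnavoidableWithin (G : SimpleGraph V) (S : Set V) (x y : V) : Prop :=
  ∀ p : G.Walk x y, p.IsPath → p.IsShortestWithin S →
    ∀ q : G.Walk x y, q.IsPath → (∀ v ∈ q.support, v ∈ S) → ∀ v ∈ p.support, v ∈ q.support

def Separates (G : SimpleGraph V) (c : V) (A B : Set V) : Prop :=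
  ∀ a ∈ A, ∀ b ∈ B, ∀ w : G.Walk a b, (∀ x ∈ w.support, x ∈ A ∪ B ∪ {c}) → c ∈ w.support

variable {A B : Set V} {c : V}

lemma Separates.symm (h : G.Separates c A B) : G.Separates c B A := by
  intro b hb a ha w hw
  rw [Set.union_comm B A] at hw
  simpa using h a ha b hb w.reverse (by simpa using hw)

lemma Separates.mem_support {a b : V} (h : G.Separates c A B) (ha : a ∈ A ∪ {c}) (hb : b ∈ B)
    (w : G.Walk a b) (hw : ∀ x ∈ w.support, x ∈ A ∪ B ∪ {c}) : c ∈ w.support := by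
  rcases ha with ha | rfl
  · exact h a ha b hb w hw
  · exact w.start_mem_support

lemma Separates.support_subset_of_isPath [DecidableEq V] (h : G.Separates c A B) (hcB : c ∉ B)
    {x y : V} (hx : x ∈ A ∪ {c}) (hy : y ∈ A ∪ {c}) {w : G.Walk x y} (hw : w.IsPath)
    (hwS : ∀ v ∈ w.support, v ∈ A ∪ B ∪ {c}) : ∀ v ∈ w.support, v ∈ A ∪ {c} := by
  intro v hv
  by_contra hvAc
  have hvB : v ∈ B :=
    ((hwS v hv).resolve_right fun hvc => hvAc (.inr hvc)).resolve_left fun hvA => hvAc (.inl hvA)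
  have hc₁ : c ∈ (w.takeUntil v hv).support := h.mem_support hx hvB _ fun u hu =>
    hwS u (w.support_takeUntil_subset_support hv hu)
  have hc₂ : c ∈ (w.dropUntil v hv).support := by
    simpa using h.mem_support hy hvB (w.dropUntil v hv).reverse fun u hu =>
      hwS u (w.support_dropUntil_subset_support hv (by simpa using hu))
  rw [← w.take_spec hv] at hw
  exact hcB (hw.eq_of_mem_support_append hc₁ hc₂ ▸ hvB)

variable {S : Set V} {x y : V}

lemma ShortestPathUnavoidableWithin.of_mem
    (h : x ∈ S → y ∈ S → G.ShortestPathUnavoidableWithin S x y) :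
    G.ShortestPathUnavoidableWithin S x y :=
  fun p hp hpS => h (hpS.1 x p.start_mem_support) (hpS.1 y p.end_mem_support) p hp hpS

lemma shortestPathUnavoidableWithin_of_isClique (hS : G.IsClique S) (x y : V) :
    G.ShortestPathUnavoidableWithin S x y := by
  intro p _ hp q _ _ v hv
  have hxS := hp.1 x p.start_mem_support
  have hyS := hp.1 y p.end_mem_support
  have hlen : p.length ≤ 1 := by
    by_cases hxy : x = y
    · subst hxy
      exact (hp.2 .nil (by simpa using hxS)).trans zero_le_one
    · exact hp.2 (hS hxS hyS hxy).toWalk (by simp [hxS, hyS])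
  rcases Walk.eq_or_eq_of_mem_support_of_length_le_one hlen hv with rfl | rfl
  · exact q.start_mem_support
  · exact q.end_mem_support

lemma ShortestPathUnavoidableWithin.union_of_separates [DecidableEq V]
    (h : G.ShortestPathUnavoidableWithin (A ∪ {c}) x y) (hsep : G.Separates c A B) (hcB : c ∉ B)
    (hx : x ∈ A ∪ {c}) (hy : y ∈ A ∪ {c}) :
    G.ShortestPathUnavoidableWithin (A ∪ B ∪ {c}) x y := by
  intro p hp hpU q hq hqU
  have hAc : A ∪ {c} ⊆ A ∪ B ∪ {c} := Set.union_subset_union_left _ Set.subset_union_left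
  exact h p hp (hpU.mono hAc (hsep.support_subset_of_isPath hcB hx hy hp hpU.1)) q hq
    (hsep.support_subset_of_isPath hcB hx hy hq hqU)

lemma Separates.shortestPathUnavoidableWithin [DecidableEq V] (hsep : G.Separates c A B)
    (hcA : c ∉ A) (hcB : c ∉ B) (hx : x ∈ A) (hy : y ∈ B)
    (hA : G.ShortestPathUnavoidableWithin (A ∪ {c}) x c)
    (hB : G.ShortestPathUnavoidableWithin (B ∪ {c}) c y) :
    G.ShortestPathUnavoidableWithin (A ∪ B ∪ {c}) x y := by
  intro p hp hpU q hq hqU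
  have hcp : c ∈ p.support := hsep x hx y hy p hpU.1
  have hcq : c ∈ q.support := hsep x hx y hy q hqU
  have hAc : A ∪ {c} ⊆ A ∪ B ∪ {c} := Set.union_subset_union_left _ Set.subset_union_left
  have hBc : B ∪ {c} ⊆ A ∪ B ∪ {c} := Set.union_subset_union_left _ Set.subset_union_right
  have left {w : G.Walk x c} (hw : w.IsPath) (hwU : ∀ v ∈ w.support, v ∈ A ∪ B ∪ {c}) :
      ∀ v ∈ w.support, v ∈ A ∪ {c} :=
    hsep.support_subset_of_isPath hcB (.inl hx) (.inr rfl) hw hwU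
  have right {w : G.Walk c y} (hw : w.IsPath) (hwU : ∀ v ∈ w.support, v ∈ A ∪ B ∪ {c}) :
      ∀ v ∈ w.support, v ∈ B ∪ {c} :=
    hsep.symm.support_subset_of_isPath hcA (.inr rfl) (.inl hy) hw (Set.union_comm A B ▸ hwU)
  have hp₁ := hpU.takeUntil hcp
  have hp₂ := hpU.dropUntil hcp
  have h₁ := hA _ (hp.takeUntil hcp) (hp₁.mono hAc (left (hp.takeUntil hcp) hp₁.1)) _
    (hq.takeUntil hcq) (left (hq.takeUntil hcq) fun v hv =>
      hqU v (q.support_takeUntil_subset_support hcq hv))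
  have h₂ := hB _ (hp.dropUntil hcp) (hp₂.mono hBc (right (hp.dropUntil hcp) hp₂.1)) _
    (hq.dropUntil hcq) (right (hq.dropUntil hcq) fun v hv =>
      hqU v (q.support_dropUntil_subset_support hcq hv))
  intro v hv
  rw [← p.take_spec hcp, Walk.mem_support_append_iff] at hv
  rw [← q.take_spec hcq, Walk.mem_support_append_iff]
  exact hv.imp (h₁ v) (h₂ v)

lemma shortestPathUnavoidableWithin_union [DecidableEq V] (hsep : G.Separates c A B)
    (hcA : c ∉ A) (hcB : c ∉ B) (hA : ∀ x y, G.ShortestPathUnavoidableWithin (A ∪ {c}) x y)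
    (hB : ∀ x y, G.ShortestPathUnavoidableWithin (B ∪ {c}) x y) (x y : V) :
    G.ShortestPathUnavoidableWithin (A ∪ B ∪ {c}) x y := by
  have hU : B ∪ A ∪ {c} = A ∪ B ∪ {c} := by rw [Set.union_comm B A]
  have left {x y : V} (hx : x ∈ A ∪ {c}) (hy : y ∈ A ∪ {c}) :=
    (hA x y).union_of_separates hsep hcB hx hy
  have right {x y : V} (hx : x ∈ B ∪ {c}) (hy : y ∈ B ∪ {c}) :
      G.ShortestPathUnavoidableWithin (A ∪ B ∪ {c}) x y :=
    hU ▸ (hB x y).union_of_separates hsep.symm hcA hx hy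
  refine .of_mem fun hx hy => ?_
  rcases hx with (hx | hx) | hx <;> rcases hy with (hy | hy) | hy
  · exact left (.inl hx) (.inl hy)
  · exact hsep.shortestPathUnavoidableWithin hcA hcB hx hy (hA x c) (hB c y)
  · exact left (.inl hx) (.inr hy)
  · exact hU ▸ hsep.symm.shortestPathUnavoidableWithin hcB hcA hx hy (hB x c) (hA c y)
  · exact right (.inl hx) (.inl hy)
  · exact right (.inl hx) (.inr hy)
  · exact left (.inr hx) (.inl hy)
  · exact right (.inr hx) (.inl hy)
  · exact left (.inr hx) (.inr hy)

theorem IsCliqueSumOfCompletes.shortestPathUnavoidableWithin [DecidableEq V]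
    (hS : G.IsCliqueSumOfCompletes S) (x y : V) : G.ShortestPathUnavoidableWithin S x y := by
  induction hS generalizing x y with
  | complete S hS => exact shortestPathUnavoidableWithin_of_isClique hS x y
  | sum A B c _ hcA hcB _ _ hsep _ _ ihA ihB =>
    exact shortestPathUnavoidableWithin_union hsep hcA hcB ihA ihB x y

end SimpleGraph

theorem shortest_path_support_subset_general {V : Type*} (G : SimpleGraph V)
    (hG : G.IsBlockGraph) (x y : V)
    (p : G.Walk x y) (hp : p.IsPath ∧ p.length = G.dist x y)
    (q : G.Walk x y) (hq : q.IsPath) :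
    ∀ v ∈ p.support, v ∈ q.support := by
  classical
  have hreach {w : G.Walk x y} : ∀ v ∈ w.support, G.Reachable x v :=
    fun v hv => ⟨w.takeUntil v hv⟩
  exact (hG x).shortestPathUnavoidableWithin x y p hp.1
    ⟨hreach, fun r _ => hp.2 ▸ G.dist_le r⟩ q hq hreach

/-- In a block graph, the vertex set of the unique shortest path between `x` and `y`
is contained in the vertex set of every path from `x` to `y`; in particular the
shortest path has the minimum number of vertices among all paths from `x` to `y`. -/
theorem shortest_path_support_subset {V : Type*} [Fintype V] (G : SimpleGraph V)
    (hG : G.IsBlockGraph) (x y : V)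
    (p : G.Walk x y) (hp : p.IsPath ∧ p.length = G.dist x y)
    (q : G.Walk x y) (hq : q.IsPath) :
    ∀ v ∈ p.support, v ∈ q.support :=
  shortest_path_support_subset_general G hG x y p hp q hq
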